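/- arXiv:1612.07460 — 3 statements merged into one kernel-verified Lean document; each statement's English description precedes it below -/
import Mathlib

section
/- Let M be a ℤ[u]-module carrying an additive endomorphism Γ satisfying Γ(f·x) = f·Γ(x) + 2u²·(∂_u f)·x for all f ∈ ℤ[u] and x ∈ M (a connection in the direction of the vector field 2u²∂_u). Then M cannot contain a direct summand isomorphic to ℤ[u]/((u−λ)^d) for any nonzero integer λ and d ≥ 1. -/
open Polynomial

/-- If a `ℤ[u]`-module `M` carries an additive endomorphism `Γ` satisfying the
connection-type Leibniz rule `Γ(f • x) = f • Γ(x) + (2u² ∂_u f) • x`, then `M`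
has no direct summand isomorphic to `ℤ[u]/((u - λ)^d)` for `λ ≠ 0`, `d ≥ 1`. -/
theorem no_torsion_summand_away_from_zero
    (M : Type*) [AddCommGroup M] [Module (Polynomial ℤ) M]
    (Γ : M → M)
    (hadd : ∀ x y : M, Γ (x + y) = Γ x + Γ y)
    (hleib : ∀ (f : Polynomial ℤ) (x : M),
      Γ (f • x) = f • Γ x + (2 * X ^ 2 * derivative f) • x)
    (lam : ℤ) (hlam : lam ≠ 0) (d : ℕ) (hd : 1 ≤ d) :
    ¬ ∃ (N N' : Submodule (Polynomial ℤ) M), IsCompl N N' ∧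
        Nonempty (N ≃ₗ[Polynomial ℤ]
          (Polynomial ℤ ⧸ Ideal.span {((X - C lam) ^ d : Polynomial ℤ)})) := by
  rintro ⟨N, N', hcompl, ⟨e⟩⟩
  set p : Polynomial ℤ := (X - C lam) ^ d with hp
  set I : Ideal (Polynomial ℤ) := Ideal.span {p} with hI
  set x : N := e.symm (Ideal.Quotient.mk I 1) with hx
  have hΓ0 : Γ 0 = 0 := by
    have h := hadd 0 0
    simp only [add_zero] at h
    exact (add_left_cancel (a := Γ 0) (by rw [add_zero, ← h])).symm
  -- p • x = 0
  have hpx : p • x = 0 := by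
    apply e.injective
    rw [map_smul, map_zero, hx, e.apply_symm_apply]
    have : p • (Ideal.Quotient.mk I 1) = Ideal.Quotient.mk I p := by
      show Ideal.Quotient.mk I (p * 1) = _
      rw [mul_one]
    rw [this, Ideal.Quotient.eq_zero_iff_mem]
    exact Ideal.mem_span_singleton_self p
  have hpxM : p • (x : M) = 0 := by
    rw [← Submodule.coe_smul, hpx, Submodule.coe_zero]
  -- decompose Γ x
  have hmem : Γ (x : M) ∈ N ⊔ N' := by
    rw [hcompl.sup_eq_top]; trivial
  obtain ⟨n, hn, n', hn', heq⟩ := Submodule.mem_sup.mp hmem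
  set q : Polynomial ℤ := 2 * X ^ 2 * derivative p with hq
  have hmain : (0 : M) = (p • n + q • (x : M)) + p • n' := by
    have h := hleib p (x : M)
    rw [hpxM, hΓ0, ← heq] at h
    rw [h, smul_add]
    abel
  have hzero : p • n + q • (x : M) = 0 := by
    have h1 : p • n + q • (x : M) ∈ N := by
      exact N.add_mem (N.smul_mem p hn) (N.smul_mem q x.2)
    have h2 : p • n + q • (x : M) ∈ N' := by
      have : p • n + q • (x : M) = -(p • n') := by
        rw [eq_neg_iff_add_eq_zero]; exact hmain.symm
      rw [this]
      exact N'.neg_mem (N'.smul_mem p hn')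
    exact (Submodule.disjoint_def.mp hcompl.disjoint) _ h1 h2
  -- move to N and apply e
  set nN : N := ⟨n, hn⟩ with hnN
  have hzeroN : p • nN + q • x = 0 := by
    apply Subtype.ext
    push_cast
    rw [add_comm] at hzero
    simpa [add_comm] using hzero
  obtain ⟨g, hg⟩ := Ideal.Quotient.mk_surjective (e nN)
  have hquot : Ideal.Quotient.mk I (p * g + q) = 0 := by
    have h := congrArg e hzeroN
    rw [map_add, map_smul, map_smul, map_zero, hx, e.apply_symm_apply, ← hg] at h
    calc Ideal.Quotient.mk I (p * g + q)
        = p • Ideal.Quotient.mk I g + q • Ideal.Quotient.mk I 1 := by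
          show Ideal.Quotient.mk I (p * g + q) =
            Ideal.Quotient.mk I (p * g) + Ideal.Quotient.mk I (q * 1)
          rw [map_add, mul_one]
      _ = 0 := h
  have hdvd : p ∣ q := by
    have hmem' : p * g + q ∈ I := Ideal.Quotient.eq_zero_iff_mem.mp hquot
    have := Ideal.mem_span_singleton.mp hmem'
    have h2 : p ∣ p * g := Dvd.intro g rfl
    have := (dvd_add_right h2).mp this
    exact this
  -- compute q and derive contradiction
  have hqeq : q = (X - C lam) ^ (d - 1) * (2 * X ^ 2 * C (d : ℤ)) := by
    rw [hq, hp, derivative_pow, derivative_X_sub_C]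
    ring
  have hpeq : p = (X - C lam) ^ (d - 1) * (X - C lam) := by
    rw [hp, ← pow_succ]
    congr 1
    omega
  rw [hqeq, hpeq] at hdvd
  have hne : ((X - C lam) ^ (d - 1) : Polynomial ℤ) ≠ 0 :=
    pow_ne_zero _ (X_sub_C_ne_zero lam)
  have hdvd2 : (X - C lam) ∣ (2 * X ^ 2 * C (d : ℤ)) :=
    (mul_dvd_mul_iff_left hne).mp hdvd
  have hroot := (dvd_iff_isRoot.mp hdvd2)
  simp [IsRoot, eval_mul, eval_pow] at hroot
  rcases hroot with h | h
  · exact hlam h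
  · omega
end

section
/- Let M be a ℤ[u]-module carrying an additive endomorphism Γ satisfying Γ(f·x) = f·Γ(x) + 2u²·(∂_u f)·x for all f ∈ ℤ[u], x ∈ M. Let p be an odd prime and λ, d positive integers both coprime to p. Then M cannot contain a direct summand isomorphic to (ℤ/p)[u]/((u−λ)^d). -/
/-!
The polynomial `f = (u - λ)^d` annihilates a summand `N ≅ (ℤ/p)[u]/((u - λ)^d)`. Applying `Γ`
to `f • x = 0` and projecting onto `N` kills the term `f • Γ x`, so `2u² f'` annihilates `N`
as well. Modulo `p`, however, `2u² f' = (u - λ)^(d-1) · 2d u²`, and `2d λ² ≠ 0` in `ℤ/p`, so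
`(u - λ)^d` does not divide it.
-/

open Polynomial

/-- The `ℤ[u]`-module `(ℤ/p)[u]/((u - λ)^d)`, with the `ℤ[u]`-action coming from
the ring homomorphism `ℤ[u] → (ℤ/p)[u] → (ℤ/p)[u]/((u-λ)^d)`. -/
abbrev modpQuot (p : ℕ) (lam : ℤ) (d : ℕ) : Type :=
  Polynomial (ZMod p) ⧸ Ideal.span {((X - C ((lam : ℤ) : ZMod p)) ^ d : Polynomial (ZMod p))}

noncomputable instance (p : ℕ) (lam : ℤ) (d : ℕ) :
    Module (Polynomial ℤ) (modpQuot p lam d) :=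
  Module.compHom (modpQuot p lam d)
    (((Ideal.Quotient.mk (Ideal.span {((X - C ((lam : ℤ) : ZMod p)) ^ d : Polynomial (ZMod p))})).comp
      (Polynomial.mapRingHom (Int.castRingHom (ZMod p)))) : Polynomial ℤ →+* modpQuot p lam d)

theorem Submodule.mem_annihilator_of_leibniz_of_isCompl {R M : Type*} [CommRing R]
    [AddCommGroup M] [Module R M] {Γ : M → M} {δ : R → R}
    (hleib : ∀ (f : R) (x : M), Γ (f • x) = f • Γ x + δ f • x)
    {N N' : Submodule R M} (hNN' : IsCompl N N') {f : R} (hf : f ∈ N.annihilator) :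
    δ f ∈ N.annihilator := by
  rw [Submodule.mem_annihilator] at hf ⊢
  intro x hx
  let π := N.projectionOnto N' hNN'
  have hΓ : f • Γ x + δ f • x = 0 := by
    rw [← hleib, hf x hx, show Γ 0 = 0 by simpa using hleib 0 0]
  have hfπ : f • π (Γ x) = 0 := Subtype.ext (hf _ (π (Γ x)).2)
  have hπx : π x = ⟨x, hx⟩ := Submodule.projectionOnto_apply_left hNN' ⟨x, hx⟩
  have hπ := congrArg π hΓ
  rw [map_add, map_smul, map_smul, hfπ, zero_add, map_zero, hπx] at hπ
  simpa using congrArg Subtype.val hπ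

theorem modpQuot_smul_def {p : ℕ} {lam : ℤ} {d : ℕ} (f : Polynomial ℤ) (y : modpQuot p lam d) :
    f • y = Ideal.Quotient.mk _ (f.map (Int.castRingHom (ZMod p))) * y :=
  rfl

theorem mem_annihilator_modpQuot_iff {p : ℕ} {lam : ℤ} {d : ℕ} {f : Polynomial ℤ} :
    f ∈ Module.annihilator (Polynomial ℤ) (modpQuot p lam d) ↔
      (X - C (lam : ZMod p)) ^ d ∣ f.map (Int.castRingHom (ZMod p)) := by
  simp only [Module.mem_annihilator, modpQuot_smul_def]
  rw [← Ideal.mem_span_singleton, ← Ideal.Quotient.eq_zero_iff_mem]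
  exact ⟨fun h => by simpa using h 1, fun h y => by rw [h, zero_mul]⟩

theorem Polynomial.not_X_sub_C_pow_dvd_pow_pred_mul {K : Type*} [CommRing K] [IsDomain K]
    {a : K} {g : K[X]} (hg : g.eval a ≠ 0) {d : ℕ} (hd : 0 < d) :
    ¬ (X - C a) ^ d ∣ (X - C a) ^ (d - 1) * g := by
  obtain ⟨n, rfl⟩ := Nat.exists_eq_add_of_lt hd
  rw [zero_add, Nat.add_sub_cancel, pow_succ,
    mul_dvd_mul_iff_left (pow_ne_zero _ (X_sub_C_ne_zero a)), dvd_iff_isRoot]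
  exact hg

theorem map_two_mul_X_sq_mul_derivative_X_sub_C_pow {R : Type*} [CommRing R] (φ : ℤ →+* R)
    (a : ℤ) (d : ℕ) :
    (2 * X ^ 2 * derivative ((X - C a) ^ d)).map φ
      = (X - C (φ a)) ^ (d - 1) * (2 * (d : R[X]) * X ^ 2) := by
  rw [derivative_X_sub_C_pow]
  simp only [map_natCast, eq_intCast, Polynomial.map_mul, Polynomial.map_ofNat, Polynomial.map_pow,
    map_X, Polynomial.map_natCast, Polynomial.map_sub, Polynomial.map_intCast, map_intCast]
  ring

theorem no_modp_torsion_summand_general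
    (M : Type*) [AddCommGroup M] [Module (Polynomial ℤ) M]
    (Γ : M → M)
    (hleib : ∀ (f : Polynomial ℤ) (x : M),
      Γ (f • x) = f • Γ x + (2 * X ^ 2 * derivative f) • x)
    (p : ℕ) (hp : p.Prime) (hodd : p ≠ 2)
    (lam d : ℕ) (hd : 0 < d)
    (hlamp : Nat.Coprime lam p) (hdp : Nat.Coprime d p) :
    ¬ ∃ (N N' : Submodule (Polynomial ℤ) M), IsCompl N N' ∧
        Nonempty (N ≃ₗ[Polynomial ℤ] modpQuot p (lam : ℤ) d) := by
  have : Fact p.Prime := ⟨hp⟩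
  rintro ⟨N, N', hNN', ⟨e⟩⟩
  have hann : N.annihilator = Module.annihilator (Polynomial ℤ) (modpQuot p lam d) :=
    e.annihilator_eq
  have hf : (X - C (lam : ℤ)) ^ d ∈ N.annihilator := by
    rw [hann, mem_annihilator_modpQuot_iff]
    simp
  have hδf := Submodule.mem_annihilator_of_leibniz_of_isCompl hleib hNN' hf
  rw [hann, mem_annihilator_modpQuot_iff, map_two_mul_X_sq_mul_derivative_X_sub_C_pow] at hδf
  have hcop : Nat.Coprime (2 * d * lam ^ 2) p :=
    (((Nat.coprime_primes Nat.prime_two hp).mpr hodd.symm).mul_left hdp).mul_left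
      (hlamp.pow_left 2)
  refine Polynomial.not_X_sub_C_pow_dvd_pow_pred_mul ?_ hd hδf
  simp only [eval_mul, eval_ofNat, eval_natCast, eval_pow, eval_X, Int.cast_natCast]
  exact_mod_cast ((ZMod.isUnit_iff_coprime _ p).mpr hcop).ne_zero

/-- If a `ℤ[u]`-module `M` carries an additive endomorphism `Γ` satisfying the
connection-type Leibniz rule `Γ(f • x) = f • Γ(x) + (2u² ∂_u f) • x`, and `p` is
an odd prime while `λ, d` are positive integers coprime to `p`, then `M` has no
direct summand isomorphic to `(ℤ/p)[u]/((u - λ)^d)`. -/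
theorem no_modp_torsion_summand
    (M : Type*) [AddCommGroup M] [Module (Polynomial ℤ) M]
    (Γ : M → M)
    (hadd : ∀ x y : M, Γ (x + y) = Γ x + Γ y)
    (hleib : ∀ (f : Polynomial ℤ) (x : M),
      Γ (f • x) = f • Γ x + (2 * X ^ 2 * derivative f) • x)
    (p : ℕ) (hp : p.Prime) (hodd : p ≠ 2)
    (lam d : ℕ) (hlam : 0 < lam) (hd : 0 < d)
    (hlamp : Nat.Coprime lam p) (hdp : Nat.Coprime d p) :
    ¬ ∃ (N N' : Submodule (Polynomial ℤ) M), IsCompl N N' ∧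
        Nonempty (N ≃ₗ[Polynomial ℤ] modpQuot p (lam : ℤ) d) :=
  no_modp_torsion_summand_general M Γ hleib p hp hodd lam d hd hlamp hdp
end

section
/- Let (C, d_eq) be a cochain complex over ℤ[[u]] of the form C = C₀[[u]] with d_eq = Σ_k uᵏ d_{eq,k}, and let μ be a diagonalizable (integer-eigenvalue) operator on C₀, extended u-linearly, satisfying μ d_eq − d_eq μ = Σ_k (1 − 2k) uᵏ d_{eq,k} − 2λ_eq for some operator λ_eq with d_eq ι_eq − ι_eq d_eq = u λ_eq for some ι_eq. Then, using ∂_u d_eq − d_eq ∂_u = Σ_k k u^{k−1} d_{eq,k}, the operator Γ_u(x) := 2u² ∂_u x + u μ(x) − 2 ι_eq(x) satisfies Γ_u d_eq − d_eq Γ_u = u·d_eq, and hence induces a well-defined additive endomorphism of H(C, d_eq) satisfying Γ_u(f x) = f Γ_u(x) + 2u²(∂_u f)x for f ∈ ℤ[[u]]. -/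
/- We model the equivariant complex `C = C₀[[u]]` by coefficient sequences
`v : ℕ → C₀`, with `u`-multiplication, formal `u`-differentiation, and an
equivariant differential `d_eq = Σ_k uᵏ d_k` acting by convolution. -/

section

variable (C₀ : Type*) [AddCommGroup C₀]

/-- `d_eq = Σ_k uᵏ d_k` acting on `C₀[[u]]`. -/
def DeqOp (d : ℕ → C₀ →+ C₀) (v : ℕ → C₀) : ℕ → C₀ :=
  fun m => ∑ k ∈ Finset.range (m + 1), d k (v (m - k))

/-- Multiplication by `u` on `C₀[[u]]`. -/
def uMulS (v : ℕ → C₀) : ℕ → C₀ :=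
  fun m => match m with
    | 0 => 0
    | Nat.succ m' => v m'

/-- Formal differentiation `∂_u` on `C₀[[u]]`. -/
def duS (v : ℕ → C₀) : ℕ → C₀ :=
  fun m => ((m : ℤ) + 1) • v (m + 1)

/-- `μ` extended `u`-linearly. -/
def muS (μ : C₀ →+ C₀) (v : ℕ → C₀) : ℕ → C₀ :=
  fun m => μ (v m)

/-- The operator `Σ_k (1 - 2k) uᵏ d_k`. -/
def SOp (d : ℕ → C₀ →+ C₀) (v : ℕ → C₀) : ℕ → C₀ :=
  fun m => ∑ k ∈ Finset.range (m + 1), (1 - 2 * (k : ℤ)) • d k (v (m - k))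

-- Auxiliary lemmas
lemma uMulS_add (a b : ℕ → C₀) : uMulS C₀ (a + b) = uMulS C₀ a + uMulS C₀ b := by
  funext m; cases m <;> simp [uMulS]

lemma uMulS_sub (a b : ℕ → C₀) : uMulS C₀ (a - b) = uMulS C₀ a - uMulS C₀ b := by
  funext m; cases m <;> simp [uMulS]

lemma uMulS_smul (z : ℤ) (a : ℕ → C₀) : uMulS C₀ (z • a) = z • uMulS C₀ a := by
  funext m; cases m <;> simp [uMulS]

lemma uMulS_zero : uMulS C₀ (0 : ℕ → C₀) = 0 := by
  funext m; cases m <;> simp [uMulS]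

lemma muS_zero (μ : C₀ →+ C₀) : muS C₀ μ (0 : ℕ → C₀) = 0 := by
  funext m; simp [muS]

lemma duS_zero : duS C₀ (0 : ℕ → C₀) = 0 := by
  funext m; simp [duS]

lemma SOp_zero (d : ℕ → C₀ →+ C₀) : SOp C₀ d (0 : ℕ → C₀) = 0 := by
  funext m; simp [SOp]

lemma DeqOp_zero (d : ℕ → C₀ →+ C₀) : DeqOp C₀ d (0 : ℕ → C₀) = 0 := by
  funext m; simp [DeqOp]

lemma DeqOp_add (d : ℕ → C₀ →+ C₀) (a b : ℕ → C₀) :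
    DeqOp C₀ d (a + b) = DeqOp C₀ d a + DeqOp C₀ d b := by
  funext m; simp [DeqOp, Finset.sum_add_distrib]

lemma DeqOp_sub (d : ℕ → C₀ →+ C₀) (a b : ℕ → C₀) :
    DeqOp C₀ d (a - b) = DeqOp C₀ d a - DeqOp C₀ d b := by
  funext m; simp [DeqOp, Finset.sum_sub_distrib]

lemma DeqOp_smul (d : ℕ → C₀ →+ C₀) (z : ℤ) (a : ℕ → C₀) :
    DeqOp C₀ d (z • a) = z • DeqOp C₀ d a := by
  funext m; simp [DeqOp, map_zsmul, Finset.smul_sum]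

lemma DeqOp_uMul (d : ℕ → C₀ →+ C₀) (a : ℕ → C₀) :
    DeqOp C₀ d (uMulS C₀ a) = uMulS C₀ (DeqOp C₀ d a) := by
  funext m
  cases m with
  | zero => simp [DeqOp, uMulS]
  | succ n =>
    show ∑ k ∈ Finset.range (n + 1 + 1), d k (uMulS C₀ a (n + 1 - k))
        = ∑ k ∈ Finset.range (n + 1), d k (a (n - k))
    rw [Finset.sum_range_succ]
    have h0 : uMulS C₀ a (n + 1 - (n + 1)) = 0 := by simp [uMulS]
    rw [h0, map_zero, add_zero]
    refine Finset.sum_congr rfl fun k hk => ?_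
    have hk' : k ≤ n := Nat.lt_succ_iff.mp (Finset.mem_range.mp hk)
    have : n + 1 - k = (n - k) + 1 := by omega
    rw [this]
    rfl

lemma star0 (d : ℕ → C₀ →+ C₀) (v : ℕ → C₀) :
    (2 : ℤ) • uMulS C₀ (uMulS C₀ (duS C₀ (DeqOp C₀ d v))) + uMulS C₀ (SOp C₀ d v)
      = (2 : ℤ) • uMulS C₀ (uMulS C₀ (DeqOp C₀ d (duS C₀ v))) + uMulS C₀ (DeqOp C₀ d v) := by
  funext m
  match m with
  | 0 => simp [uMulS]
  | 1 => simp [uMulS, SOp, DeqOp]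
  | (n+2) =>
    show (2 : ℤ) • (duS C₀ (DeqOp C₀ d v)) n + SOp C₀ d v (n+1)
        = (2 : ℤ) • (DeqOp C₀ d (duS C₀ v)) n + DeqOp C₀ d v (n+1)
    have lhs1 : (2 : ℤ) • (duS C₀ (DeqOp C₀ d v)) n + SOp C₀ d v (n+1)
        = ∑ k ∈ Finset.range (n+2), (2 * ((n:ℤ) + 1) + (1 - 2 * (k:ℤ))) • d k (v (n + 1 - k)) := by
      simp only [duS, SOp, DeqOp, smul_smul, Finset.smul_sum, ← Finset.sum_add_distrib,
        ← add_smul]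
    have rhs1 : (2 : ℤ) • (DeqOp C₀ d (duS C₀ v)) n + DeqOp C₀ d v (n+1)
        = ∑ k ∈ Finset.range (n+2), (2 * (((n + 1 - k : ℕ) : ℤ))) • d k (v (n + 1 - k))
          + ∑ k ∈ Finset.range (n+2), d k (v (n + 1 - k)) := by
      congr 1
      simp only [DeqOp, duS, map_zsmul, Finset.smul_sum, smul_smul]
      conv_rhs => rw [Finset.sum_range_succ]
      have hz : (2 * (((n + 1 - (n+1) : ℕ) : ℤ))) • d (n+1) (v (n + 1 - (n+1))) = 0 := by
        simp
      rw [hz, add_zero]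
      refine Finset.sum_congr rfl fun k hk => ?_
      have hk' : k ≤ n := Nat.lt_succ_iff.mp (Finset.mem_range.mp hk)
      have h1 : n + 1 - k = (n - k) + 1 := by omega
      rw [h1]
      congr 1
    rw [lhs1, rhs1, ← Finset.sum_add_distrib]
    refine Finset.sum_congr rfl fun k hk => ?_
    have hk' : k ≤ n + 1 := Nat.lt_succ_iff.mp (Finset.mem_range.mp hk)
    have hc : (2 * ((n:ℤ) + 1) + (1 - 2 * (k:ℤ))) = 2 * (((n + 1 - k : ℕ) : ℤ)) + 1 := by
      rw [Nat.cast_sub hk']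
      push_cast
      ring
    rw [hc, add_smul, one_smul]

/-- Suppose `μ d_eq - d_eq μ = Σ_k (1-2k) uᵏ d_k - 2 λ_eq` and the Cartan
relation `d_eq ι_eq - ι_eq d_eq = u λ_eq` hold.  Then (using the provable
commutator formula `∂_u d_eq - d_eq ∂_u = Σ_k k u^{k-1} d_k`) the operator
`Γ_u = 2u² ∂_u + u μ - 2 ι_eq` satisfies `Γ_u d_eq - d_eq Γ_u = u·d_eq`; in
particular `Γ_u` preserves cocycles (and coboundaries), hence induces an
additive endomorphism of the cohomology of `(C₀[[u]], d_eq)`. -/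
theorem gamma_u_commutator
    (d : ℕ → C₀ →+ C₀) (μ : C₀ →+ C₀)
    (L I : (ℕ → C₀) → (ℕ → C₀))
    (hd2 : ∀ v, DeqOp C₀ d (DeqOp C₀ d v) = 0)
    (hmu : ∀ v, muS C₀ μ (DeqOp C₀ d v) - DeqOp C₀ d (muS C₀ μ v) =
      SOp C₀ d v - (2 : ℤ) • L v)
    (hcart : ∀ v, DeqOp C₀ d (I v) - I (DeqOp C₀ d v) = uMulS C₀ (L v)) :
    (∀ v, ((2 : ℤ) • uMulS C₀ (uMulS C₀ (duS C₀ (DeqOp C₀ d v)))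
          + uMulS C₀ (muS C₀ μ (DeqOp C₀ d v)) - (2 : ℤ) • I (DeqOp C₀ d v))
        - DeqOp C₀ d ((2 : ℤ) • uMulS C₀ (uMulS C₀ (duS C₀ v))
          + uMulS C₀ (muS C₀ μ v) - (2 : ℤ) • I v)
        = uMulS C₀ (DeqOp C₀ d v)) ∧
    (∀ v, DeqOp C₀ d v = 0 →
      DeqOp C₀ d ((2 : ℤ) • uMulS C₀ (uMulS C₀ (duS C₀ v))
        + uMulS C₀ (muS C₀ μ v) - (2 : ℤ) • I v) = 0) := by
  have part1 : ∀ v, ((2 : ℤ) • uMulS C₀ (uMulS C₀ (duS C₀ (DeqOp C₀ d v)))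
          + uMulS C₀ (muS C₀ μ (DeqOp C₀ d v)) - (2 : ℤ) • I (DeqOp C₀ d v))
        - DeqOp C₀ d ((2 : ℤ) • uMulS C₀ (uMulS C₀ (duS C₀ v))
          + uMulS C₀ (muS C₀ μ v) - (2 : ℤ) • I v)
        = uMulS C₀ (DeqOp C₀ d v) := by
    intro v
    have h1 : uMulS C₀ (muS C₀ μ (DeqOp C₀ d v)) - uMulS C₀ (DeqOp C₀ d (muS C₀ μ v))
        - (uMulS C₀ (SOp C₀ d v) - (2 : ℤ) • uMulS C₀ (L v)) = 0 := by
      have := congrArg (uMulS C₀) (hmu v)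
      rw [uMulS_sub, uMulS_sub, uMulS_smul] at this
      rw [this, sub_self]
    have h2 : (DeqOp C₀ d (I v) - I (DeqOp C₀ d v)) - uMulS C₀ (L v) = 0 :=
      sub_eq_zero_of_eq (hcart v)
    have h3 : ((2 : ℤ) • uMulS C₀ (uMulS C₀ (duS C₀ (DeqOp C₀ d v))) + uMulS C₀ (SOp C₀ d v))
        - ((2 : ℤ) • uMulS C₀ (uMulS C₀ (DeqOp C₀ d (duS C₀ v))) + uMulS C₀ (DeqOp C₀ d v))
        = 0 := sub_eq_zero_of_eq (star0 C₀ d v)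
    rw [DeqOp_sub, DeqOp_add, DeqOp_smul, DeqOp_smul, DeqOp_uMul, DeqOp_uMul, DeqOp_uMul]
    rw [← sub_eq_zero]
    rw [show (0 : ℕ → C₀)
        = (uMulS C₀ (muS C₀ μ (DeqOp C₀ d v)) - uMulS C₀ (DeqOp C₀ d (muS C₀ μ v))
            - (uMulS C₀ (SOp C₀ d v) - (2 : ℤ) • uMulS C₀ (L v)))
          + (2 : ℤ) • ((DeqOp C₀ d (I v) - I (DeqOp C₀ d v)) - uMulS C₀ (L v))
          + (((2 : ℤ) • uMulS C₀ (uMulS C₀ (duS C₀ (DeqOp C₀ d v))) + uMulS C₀ (SOp C₀ d v))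
            - ((2 : ℤ) • uMulS C₀ (uMulS C₀ (DeqOp C₀ d (duS C₀ v))) + uMulS C₀ (DeqOp C₀ d v)))
        from by rw [h1, h2, h3]; simp]
    abel
  refine ⟨part1, fun v hv => ?_⟩
  -- second part
  have hL : (2 : ℤ) • L 0 = (0 : ℕ → C₀) := by
    have := hmu 0
    rw [DeqOp_zero, muS_zero, SOp_zero, DeqOp_zero] at this
    simpa using this.symm
  have hcart0 : DeqOp C₀ d (I 0) - I 0 = uMulS C₀ (L 0) := by
    have := hcart 0
    rwa [DeqOp_zero] at this
  have hGamma : DeqOp C₀ d ((2 : ℤ) • uMulS C₀ (uMulS C₀ (duS C₀ v))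
      + uMulS C₀ (muS C₀ μ v) - (2 : ℤ) • I v) = -((2 : ℤ) • I 0) := by
    have h := part1 v
    rw [hv, duS_zero, uMulS_zero, uMulS_zero, muS_zero, uMulS_zero] at h
    have h' := sub_eq_zero.mp h
    rw [← h']
    simp
  have hdd := hd2 ((2 : ℤ) • uMulS C₀ (uMulS C₀ (duS C₀ v))
      + uMulS C₀ (muS C₀ μ v) - (2 : ℤ) • I v)
  rw [hGamma] at hdd
  -- hdd : DeqOp d (-(2 • I 0)) = 0
  have hdI : (2 : ℤ) • DeqOp C₀ d (I 0) = 0 := by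
    have : DeqOp C₀ d ((-2 : ℤ) • I 0) = 0 := by
      rw [show (-2 : ℤ) • I 0 = -((2 : ℤ) • I 0) from by simp [neg_smul]]
      exact hdd
    rw [DeqOp_smul] at this
    have h2 : ((-2 : ℤ)) • DeqOp C₀ d (I 0) = -((2:ℤ) • DeqOp C₀ d (I 0)) := by
      simp [neg_smul]
    rw [h2] at this
    simpa using this
  have hI0 : (2 : ℤ) • I 0 = (0 : ℕ → C₀) := by
    have := congrArg (fun w => (2 : ℤ) • w) hcart0
    simp only [smul_sub] at this
    rw [hdI, ← uMulS_smul, hL, uMulS_zero] at this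
    -- this : 0 - 2 • I 0 = 0
    have := this
    rw [zero_sub, neg_eq_zero] at this
    exact this
  rw [hGamma, hI0, neg_zero]

end
end
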